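/- Let α ∈ (1/2, 1], r ∈ (1/(2α), 1), δ ∈ (0,1), and C > 0. Let Y be a finite subset of the unit ball B_n ⊆ ℝⁿ with |Y| < δ(2rα)ⁿ/C, and let x be a random point from a distribution on the unit ball whose density ρ satisfies ρ(z) ≤ C/(rⁿ · Vol(B_n)) for all z. Then with probability greater than 1 − δ, the point x is Fisher-separable from Y with threshold α, i.e., α⟨x,x⟩ > ⟨x,y⟩ for all y ∈ Y. -/

import Mathlib

open MeasureTheory ProbabilityTheory Real
open scoped RealInnerProductSpace ENNReal NNReal

/-!
The points that fail to be separated from `y` are those with `α‖x‖² ≤ ⟪x, y⟫`, i.e. the closed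
ball with centre `y / (2α)` and radius `‖y‖ / (2α) ≤ 1 / (2α)`. Its volume is `(2α)⁻ⁿ Vol(Bₙ)`,
so the density bound gives it probability at most `C / (2rα)ⁿ`, and a union bound over `Y`
finishes the proof.
-/

theorem setOf_le_inner_subset_closedBall {E : Type*} [NormedAddCommGroup E]
    [InnerProductSpace ℝ E] {α : ℝ} (hα : 0 < α) (y : E) :
    {x : E | α * ⟪x, x⟫ ≤ ⟪x, y⟫} ⊆
      Metric.closedBall ((2 * α)⁻¹ • y) ((2 * α)⁻¹ * ‖y‖) := by
  intro x hx
  set z := (2 * α)⁻¹ • y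
  have hz : ‖z‖ = (2 * α)⁻¹ * ‖y‖ := by
    rw [norm_smul, Real.norm_of_nonneg (by positivity)]
  have hxz : ⟪x, z⟫ = (2 * α)⁻¹ * ⟪x, y⟫ := real_inner_smul_right x y _
  have hsq : ‖x - z‖ ^ 2 - ‖z‖ ^ 2 = α⁻¹ * (α * ⟪x, x⟫ - ⟪x, y⟫) := by
    rw [norm_sub_sq_real, hxz, real_inner_self_eq_norm_sq]
    field_simp
    ring
  have hle : ‖x - z‖ ^ 2 ≤ ‖z‖ ^ 2 := by
    have : α⁻¹ * (α * ⟪x, x⟫ - ⟪x, y⟫) ≤ 0 :=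
      mul_nonpos_of_nonneg_of_nonpos (by positivity) (sub_nonpos.2 hx)
    linarith
  rw [Metric.mem_closedBall, dist_eq_norm, ← hz]
  exact (pow_le_pow_iff_left₀ (norm_nonneg _) (norm_nonneg _) two_ne_zero).1 hle

theorem withDensity_apply_le_mul {X : Type*} [MeasurableSpace X] (μ : Measure X)
    {ρ : X → ℝ≥0∞} {c : ℝ≥0∞} (hρ : ∀ z, ρ z ≤ c) (s : Set X) :
    μ.withDensity ρ s ≤ c * μ s := by
  have hle : μ.withDensity ρ ≤ c • μ :=
    withDensity_const (μ := μ) c ▸ withDensity_mono (Filter.Eventually.of_forall hρ)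
  exact hle s

theorem withDensity_closedBall_le {n : ℕ} {r C R : ℝ} (hr : 0 < r) (hR : 0 ≤ R)
    {ρ : EuclideanSpace ℝ (Fin n) → ℝ≥0∞}
    (hρ : ∀ z, ρ z ≤ ENNReal.ofReal
      (C / (r ^ n * (volume (Metric.closedBall (0 : EuclideanSpace ℝ (Fin n)) 1)).toReal)))
    (z : EuclideanSpace ℝ (Fin n)) :
    volume.withDensity ρ (Metric.closedBall z R) ≤ ENNReal.ofReal (C * (R / r) ^ n) := by
  set V := volume (Metric.closedBall (0 : EuclideanSpace ℝ (Fin n)) 1)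
  have hV0 : 0 < V.toReal :=
    ENNReal.toReal_pos (Metric.measure_closedBall_pos volume 0 one_pos).ne'
      measure_closedBall_lt_top.ne
  calc volume.withDensity ρ (Metric.closedBall z R)
      ≤ ENNReal.ofReal (C / (r ^ n * V.toReal)) * volume (Metric.closedBall z R) :=
        withDensity_apply_le_mul _ hρ _
    _ = ENNReal.ofReal (C / (r ^ n * V.toReal) * (R ^ n * V.toReal)) := by
        rw [Measure.addHaar_closedBall' volume z hR, finrank_euclideanSpace_fin,
          ENNReal.ofReal_mul' (by positivity), ENNReal.ofReal_mul (by positivity),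
          ENNReal.ofReal_toReal measure_closedBall_lt_top.ne]
    _ = ENNReal.ofReal (C * (R / r) ^ n) := by
        congr 1
        rw [div_pow]
        field_simp

theorem withDensity_setOf_le_inner_le {n : ℕ} {α r C : ℝ} (hα : 0 < α) (hr : 0 < r)
    {ρ : EuclideanSpace ℝ (Fin n) → ℝ≥0∞}
    (hρ : ∀ z, ρ z ≤ ENNReal.ofReal
      (C / (r ^ n * (volume (Metric.closedBall (0 : EuclideanSpace ℝ (Fin n)) 1)).toReal)))
    {y : EuclideanSpace ℝ (Fin n)} (hy : ‖y‖ ≤ 1) :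
    volume.withDensity ρ {x | α * ⟪x, x⟫ ≤ ⟪x, y⟫} ≤
      ENNReal.ofReal (C * ((2 * α)⁻¹ / r) ^ n) :=
  (measure_mono <| (setOf_le_inner_subset_closedBall hα y).trans <|
      Metric.closedBall_subset_closedBall <| mul_le_of_le_one_right (by positivity) hy).trans
    (withDensity_closedBall_le hr (by positivity) hρ _)

theorem ofReal_one_sub_lt_of_measure_compl_lt {X : Type*} [MeasurableSpace X] {μ : Measure X}
    [IsProbabilityMeasure μ] {s : Set X} {δ : ℝ} (hδ : δ ≤ 1)
    (h : μ sᶜ < ENNReal.ofReal δ) : ENNReal.ofReal (1 - δ) < μ s := by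
  have hδ0 : 0 < δ := ENNReal.ofReal_pos.1 (zero_le.trans_lt h)
  by_contra! hs
  have hlt : μ s + μ sᶜ < ENNReal.ofReal (1 - δ) + ENNReal.ofReal δ :=
    ENNReal.add_lt_add_of_le_of_lt (measure_ne_top μ s) hs h
  rw [← ENNReal.ofReal_add (by linarith) (by linarith), sub_add_cancel, ENNReal.ofReal_one,
    ← measure_univ (μ := μ)] at hlt
  exact (measure_univ_le_add_compl s).not_gt hlt

theorem stmt_0 (n : ℕ) (α r δ C : ℝ) (hα : 1/2 < α)
    (hr1 : 1/(2*α) < r) (hδ0 : 0 < δ) (hδ1 : δ < 1) (hC : 0 < C)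
    (Y : Finset (EuclideanSpace ℝ (Fin n))) (hY : ∀ y ∈ Y, ‖y‖ ≤ 1)
    (hYcard : (Y.card : ℝ) < δ * (2*r*α)^n / C)
    (ρ : EuclideanSpace ℝ (Fin n) → ℝ≥0∞)
    (hρ : ∀ z, ρ z ≤ ENNReal.ofReal
      (C / (r^n * (volume (Metric.closedBall (0 : EuclideanSpace ℝ (Fin n)) 1)).toReal)))
    (hprob : IsProbabilityMeasure (volume.withDensity ρ)) :
    (volume.withDensity ρ) {x | ∀ y ∈ Y, α * ⟪x, x⟫ > ⟪x, y⟫} > ENNReal.ofReal (1 - δ) := by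
  have hα0 : 0 < α := by linarith
  have hr0 : 0 < r := lt_trans (by positivity) hr1
  have hcard : (Y.card : ℝ) * (C * ((2 * α)⁻¹ / r) ^ n) < δ := by
    have hp : C * ((2 * α)⁻¹ / r) ^ n = C / (2 * r * α) ^ n := by
      rw [div_eq_mul_inv C, ← inv_pow, mul_right_comm 2 r, div_eq_mul_inv]
      simp only [mul_inv]
    rw [hp, ← mul_div_assoc, div_lt_iff₀ (by positivity)]
    have := (lt_div_iff₀ hC).1 hYcard
    linarith
  have hcompl : {x | ∀ y ∈ Y, α * ⟪x, x⟫ > ⟪x, y⟫}ᶜ = ⋃ y ∈ Y, {x | α * ⟪x, x⟫ ≤ ⟪x, y⟫} := by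
    ext x
    simp
  refine ofReal_one_sub_lt_of_measure_compl_lt hδ1.le ?_
  calc volume.withDensity ρ {x | ∀ y ∈ Y, α * ⟪x, x⟫ > ⟪x, y⟫}ᶜ
      ≤ ∑ y ∈ Y, volume.withDensity ρ {x | α * ⟪x, x⟫ ≤ ⟪x, y⟫} :=
        hcompl ▸ measure_biUnion_finset_le Y _
    _ ≤ Y.card * ENNReal.ofReal (C * ((2 * α)⁻¹ / r) ^ n) := by
        simpa only [nsmul_eq_mul] using Finset.sum_le_card_nsmul Y _ _
          fun y hy => withDensity_setOf_le_inner_le hα0 hr0 hρ (hY y hy)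
    _ < ENNReal.ofReal δ := by
        rwa [← ENNReal.ofReal_natCast, ← ENNReal.ofReal_mul (by positivity),
          ENNReal.ofReal_lt_ofReal_iff hδ0]
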